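/- Let d ∈ {2,3} and s ∈ [0, 1/2]. There exists a constant C > 0, depending only on d and s, such that for all k, t > 0 with kt ≥ 1 and all measurable functions F, G : ℝ^d → [0, ∞), ∫_{{ξ : ‖ξ⁻‖ < kt/2 and |ξ_d| > kt/2}} (1 + ‖ξ‖²)^s · ((‖ξ⁻‖ + kt)² + ξ_d²)^{−1/2} · F(ξ) G(ξ) dξ ≤ C (kt)^{2s−1} ‖F‖_{L²(ℝ^d)} ‖G‖_{L²(ℝ^d)}. -/

import Mathlib

open MeasureTheory
open scoped ENNReal

/-- `‖ξ⁻‖`, the Euclidean norm of the first `d − 1` coordinates of `ξ ∈ ℝ^d`. -/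
noncomputable def xiMinusNorm {d : ℕ} (ξ : EuclideanSpace ℝ (Fin d)) : ℝ :=
  Real.sqrt (∑ i ∈ Finset.univ.filter (fun i : Fin d => (i : ℕ) < d - 1), ξ i ^ 2)

/-- `ξ_d`, the last coordinate of `ξ ∈ ℝ^d`. -/
noncomputable def xiLast {d : ℕ} (hd : 0 < d) (ξ : EuclideanSpace ℝ (Fin d)) : ℝ :=
  ξ ⟨d - 1, Nat.sub_lt hd one_pos⟩

/-!
On the region `‖ξ⁻‖ < kt/2 < |ξ_d|` with `kt ≥ 1` the last coordinate dominates: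
`1 + ‖ξ‖² ≤ 6 ξ_d²`, while `((‖ξ⁻‖ + kt)² + ξ_d²)^(-1/2) ≤ |ξ_d|⁻¹`. So the weight is at most
`6^s |ξ_d|^(2s-1) ≤ 6^s (kt/2)^(2s-1)`, because `2s - 1 ≤ 0`, and Cauchy–Schwarz bounds what is
left by `‖F‖₂ ‖G‖₂`.
-/

lemma norm_sq_eq_xiMinusNorm_sq_add_xiLast_sq {d : ℕ} (hd : 0 < d)
    (ξ : EuclideanSpace ℝ (Fin d)) : ‖ξ‖ ^ 2 = xiMinusNorm ξ ^ 2 + xiLast hd ξ ^ 2 := by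
  have hlast : Finset.univ.filter (fun i : Fin d => ¬ (i : ℕ) < d - 1)
      = {⟨d - 1, Nat.sub_lt hd one_pos⟩} := by
    ext i
    simp only [Finset.mem_filter, Finset.mem_univ, true_and, Finset.mem_singleton, Fin.ext_iff]
    omega
  rw [EuclideanSpace.norm_sq_eq, xiMinusNorm, Real.sq_sqrt (by positivity),
    ← Finset.sum_filter_add_sum_filter_not Finset.univ (fun i : Fin d => (i : ℕ) < d - 1), hlast,
    Finset.sum_singleton, xiLast]
  simp only [Real.norm_eq_abs, sq_abs]

lemma one_add_sq_add_sq_rpow_mul_rpow_neg_half_le {s a b m : ℝ} (hs : 0 ≤ s) (hs' : s ≤ 1 / 2)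
    (hm : 1 ≤ m) (ha : |a| < m / 2) (hb : m / 2 < |b|) :
    (1 + (a ^ 2 + b ^ 2)) ^ s * ((a + m) ^ 2 + b ^ 2) ^ (-(1 / 2) : ℝ)
      ≤ 6 ^ s * (m / 2) ^ (2 * s - 1) := by
  have hm2 : 0 < m / 2 := by linarith
  have hmb : (m / 2) ^ 2 < b ^ 2 := sq_lt_sq.2 (by rwa [abs_of_pos hm2])
  have hab : a ^ 2 < b ^ 2 := sq_lt_sq.2 (ha.trans hb)
  have hb0 : 0 < b ^ 2 := (by positivity : (0 : ℝ) < (m / 2) ^ 2).trans hmb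
  calc (1 + (a ^ 2 + b ^ 2)) ^ s * ((a + m) ^ 2 + b ^ 2) ^ (-(1 / 2) : ℝ)
      ≤ (6 * b ^ 2) ^ s * (b ^ 2) ^ (-(1 / 2) : ℝ) :=
        mul_le_mul (Real.rpow_le_rpow (by positivity) (by nlinarith) hs)
          (Real.rpow_le_rpow_of_nonpos hb0 (by nlinarith) (by norm_num)) (by positivity)
          (by positivity)
    _ = 6 ^ s * (b ^ 2) ^ (s - 1 / 2) := by
        rw [Real.mul_rpow (by norm_num) hb0.le, mul_assoc, ← Real.rpow_add hb0]
        ring_nf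
    _ ≤ 6 ^ s * ((m / 2) ^ 2) ^ (s - 1 / 2) := by
        gcongr 6 ^ s * ?_
        exact Real.rpow_le_rpow_of_nonpos (by positivity) hmb.le (by linarith)
    _ = 6 ^ s * (m / 2) ^ (2 * s - 1) := by
        rw [← Real.rpow_natCast, ← Real.rpow_mul hm2.le]
        ring_nf

lemma lintegral_ofReal_mul_ofReal_le {α : Type*} [MeasurableSpace α] {μ : Measure α}
    {F G : α → ℝ} (hF : AEMeasurable F μ) (hG : AEMeasurable G μ) :
    ∫⁻ x, ENNReal.ofReal (F x) * ENNReal.ofReal (G x) ∂μ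
      ≤ (∫⁻ x, ENNReal.ofReal (F x ^ 2) ∂μ) ^ (1 / 2 : ℝ)
        * (∫⁻ x, ENNReal.ofReal (G x ^ 2) ∂μ) ^ (1 / 2 : ℝ) := by
  have ofReal_sq_le (y : ℝ) : ENNReal.ofReal y ^ (2 : ℝ) ≤ ENNReal.ofReal (y ^ 2) := by
    rw [ENNReal.rpow_two]
    rcases le_total 0 y with hy | hy
    · rw [ENNReal.ofReal_pow hy]
    · simp [ENNReal.ofReal_of_nonpos hy]
  calc ∫⁻ x, ENNReal.ofReal (F x) * ENNReal.ofReal (G x) ∂μ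
      ≤ (∫⁻ x, ENNReal.ofReal (F x) ^ (2 : ℝ) ∂μ) ^ (1 / 2 : ℝ)
        * (∫⁻ x, ENNReal.ofReal (G x) ^ (2 : ℝ) ∂μ) ^ (1 / 2 : ℝ) :=
        ENNReal.lintegral_mul_le_Lp_mul_Lq μ Real.HolderConjugate.two_two
          hF.ennreal_ofReal hG.ennreal_ofReal
    _ ≤ _ := by
        gcongr with x x
        · exact ofReal_sq_le (F x)
        · exact ofReal_sq_le (G x)

lemma setLIntegral_ofReal_mul_mul_le {α : Type*} [MeasurableSpace α] {μ : Measure α}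
    {S : Set α} {w F G : α → ℝ} {c : ℝ} (hF : AEMeasurable F μ) (hG : AEMeasurable G μ)
    (hF0 : ∀ x, 0 ≤ F x) (hG0 : ∀ x, 0 ≤ G x) (hw : ∀ x ∈ S, w x ≤ c) :
    ∫⁻ x in S, ENNReal.ofReal (w x * F x * G x) ∂μ
      ≤ ENNReal.ofReal c * (∫⁻ x, ENNReal.ofReal (F x ^ 2) ∂μ) ^ (1 / 2 : ℝ)
        * (∫⁻ x, ENNReal.ofReal (G x ^ 2) ∂μ) ^ (1 / 2 : ℝ) := by
  have hpointwise : ∀ x ∈ S, ENNReal.ofReal (w x * F x * G x)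
      ≤ ENNReal.ofReal c * (ENNReal.ofReal (F x) * ENNReal.ofReal (G x)) := fun x hx => by
    have hFG : 0 ≤ F x * G x := mul_nonneg (hF0 x) (hG0 x)
    rw [← ENNReal.ofReal_mul (hF0 x), ← ENNReal.ofReal_mul' hFG, mul_assoc]
    exact ENNReal.ofReal_le_ofReal (mul_le_mul_of_nonneg_right (hw x hx) hFG)
  calc ∫⁻ x in S, ENNReal.ofReal (w x * F x * G x) ∂μ
      ≤ ∫⁻ x in S, ENNReal.ofReal c * (ENNReal.ofReal (F x) * ENNReal.ofReal (G x)) ∂μ :=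
        setLIntegral_mono_ae
          ((hF.ennreal_ofReal.mul hG.ennreal_ofReal).const_mul _).restrict (ae_of_all _ hpointwise)
    _ ≤ ∫⁻ x, ENNReal.ofReal c * (ENNReal.ofReal (F x) * ENNReal.ofReal (G x)) ∂μ :=
        setLIntegral_le_lintegral _ _
    _ = ENNReal.ofReal c * ∫⁻ x, ENNReal.ofReal (F x) * ENNReal.ofReal (G x) ∂μ :=
        lintegral_const_mul' _ _ ENNReal.ofReal_ne_top
    _ ≤ _ := by
        rw [mul_assoc]
        gcongr
        exact lintegral_ofReal_mul_ofReal_le hF hG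

/-- Estimate of the term `I₃`, over the region `{‖ξ⁻‖ < kt/2, |ξ_d| > kt/2}` in the unique continuation
argument for the Helmholtz equation with a random potential. -/
theorem stmt_6 (d : ℕ) (hd : d = 2 ∨ d = 3) (s : ℝ) (hs : 0 ≤ s) (hs' : s ≤ 1 / 2) :
    ∃ C > (0 : ℝ), ∀ k t : ℝ, 0 < k → 0 < t → 1 ≤ k * t →
      ∀ F G : EuclideanSpace ℝ (Fin d) → ℝ, Measurable F → Measurable G →
        (∀ ξ, 0 ≤ F ξ) → (∀ ξ, 0 ≤ G ξ) →
        (∫⁻ ξ in {ξ | xiMinusNorm ξ < k * t / 2 ∧ k * t / 2 < |xiLast (by omega) ξ|},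
            ENNReal.ofReal ((1 + ‖ξ‖ ^ 2) ^ s
              * ((xiMinusNorm ξ + k * t) ^ 2 + xiLast (by omega) ξ ^ 2) ^ (-(1 / 2) : ℝ)
              * F ξ * G ξ)) ≤
          ENNReal.ofReal (C * (k * t) ^ (2 * s - 1))
            * (∫⁻ ξ, ENNReal.ofReal (F ξ ^ 2)) ^ (1 / 2 : ℝ)
            * (∫⁻ ξ, ENNReal.ofReal (G ξ ^ 2)) ^ (1 / 2 : ℝ) := by
  have hd0 : 0 < d := by omega
  refine ⟨6 ^ s * 2 ^ (1 - 2 * s), by positivity, fun k t _ _ hkt F G hF hG hF0 hG0 => ?_⟩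
  have hhalf : (k * t / 2) ^ (2 * s - 1) = 2 ^ (1 - 2 * s) * (k * t) ^ (2 * s - 1) := by
    rw [Real.div_rpow (by positivity) zero_le_two, div_eq_inv_mul, ← Real.rpow_neg zero_le_two,
      neg_sub]
  refine setLIntegral_ofReal_mul_mul_le hF.aemeasurable hG.aemeasurable hF0 hG0 fun ξ hξ => ?_
  rw [mul_assoc, ← hhalf, norm_sq_eq_xiMinusNorm_sq_add_xiLast_sq hd0]
  exact one_add_sq_add_sq_rpow_mul_rpow_neg_half_le hs hs' hkt
    ((abs_of_nonneg (Real.sqrt_nonneg _)).trans_lt hξ.1) hξ.2
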